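/- Let X ⊆ 2^ω be closed under concatenation with finite binary strings in the sense that for every finite binary string s and every y ∈ 2^ω, s⌢y ∈ X if and only if y ∈ X. Then for every b ∈ F_X and every n ∈ ℕ, also b + n ∈ F_X, where b + n = { k + n : k ∈ b }. -/
import Mathlib


open Filter Set

/-- The splitting point of two distinct elements of Cantor space. -/
noncomputable def splitPt (x y : ℕ → Bool) : ℕ := sInf {n | x n ≠ y n}

/-- The set of splitting points of a set `X ⊆ 2^ω`. -/
def splitPts (X : Set (ℕ → Bool)) : Set ℕ :=
  {k | ∃ x ∈ X, ∃ y ∈ X, x ≠ y ∧ splitPt x y = k}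

/-- The Raisonnier filter of `X ⊆ 2^ω`: all `a ⊆ ℕ` such that there is a countable
family `(Y n)` covering `X` with `⋃ n, H(Y n) ⊆ a`. -/
def raisonnier (X : Set (ℕ → Bool)) : Set (Set ℕ) :=
  {a | ∃ Y : ℕ → Set (ℕ → Bool), X ⊆ (⋃ n, Y n) ∧ (⋃ n, splitPts (Y n)) ⊆ a}

/-- Concatenation of a finite binary string `s` with `y ∈ 2^ω`. -/
def cat (s : List Bool) (y : ℕ → Bool) : ℕ → Bool :=
  fun n => if h : n < s.length then s.get ⟨n, h⟩ else y (n - s.length)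

lemma cat_apply_ge (s : List Bool) (y : ℕ → Bool) {m : ℕ} (h : s.length ≤ m) :
    cat s y m = y (m - s.length) := by
  simp [cat, Nat.not_lt.mpr h]

lemma cat_injective (s : List Bool) : Function.Injective (cat s) := by
  intro y y' h
  funext k
  have := congrFun h (k + s.length)
  rwa [cat_apply_ge s y (Nat.le_add_left _ _), cat_apply_ge s y' (Nat.le_add_left _ _),
    Nat.add_sub_cancel] at this

lemma splitPt_cat (s : List Bool) {y y' : ℕ → Bool} (h : y ≠ y') :
    splitPt (cat s y) (cat s y') = splitPt y y' + s.length := by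
  obtain ⟨k, hk⟩ := Function.ne_iff.mp h
  have hmem : splitPt y y' ∈ {n | y n ≠ y' n} := Nat.sInf_mem ⟨k, hk⟩
  apply le_antisymm
  · apply Nat.sInf_le
    show cat s y _ ≠ cat s y' _
    rw [cat_apply_ge s y (Nat.le_add_left _ _), cat_apply_ge s y' (Nat.le_add_left _ _),
      Nat.add_sub_cancel]
    exact hmem
  · apply le_csInf
    · exact ⟨splitPt y y' + s.length, by
        show cat s y _ ≠ cat s y' _
        rw [cat_apply_ge s y (Nat.le_add_left _ _), cat_apply_ge s y' (Nat.le_add_left _ _),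
          Nat.add_sub_cancel]
        exact hmem⟩
    · intro m hm
      have hge : s.length ≤ m := by
        by_contra hlt
        push_neg at hlt
        exact hm (by simp [cat, hlt])
      have : y (m - s.length) ≠ y' (m - s.length) := by
        have h2 : cat s y m ≠ cat s y' m := hm
        rwa [cat_apply_ge s y hge, cat_apply_ge s y' hge] at h2
      have h1 : splitPt y y' ≤ m - s.length := Nat.sInf_le this
      omega

theorem stmt9 (X : Set (ℕ → Bool))
    (hX : ∀ (s : List Bool) (y : ℕ → Bool), cat s y ∈ X ↔ y ∈ X) :
    ∀ b ∈ raisonnier X, ∀ n : ℕ, (fun k => k + n) '' b ∈ raisonnier X := by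
  rintro b ⟨Y, hcov, hsp⟩ n
  let e : ℕ → List Bool × ℕ := fun m => (Encodable.decode (α := List Bool × ℕ) m).getD ([], 0)
  have he : ∀ p : List Bool × ℕ, e (Encodable.encode p) = p := by
    intro p
    show (Encodable.decode (α := List Bool × ℕ) (Encodable.encode p)).getD ([], 0) = p
    rw [Encodable.encodek]
    rfl
  refine ⟨fun m => if (e m).1.length = n then cat (e m).1 '' Y (e m).2 else ∅, ?_, ?_⟩
  · intro x hx
    obtain ⟨s, hslen, hsget⟩ : ∃ s : List Bool, s.length = n ∧
        ∀ m (h : m < s.length), s.get ⟨m, h⟩ = x m :=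
      ⟨List.ofFn (fun i : Fin n => x i), by simp, by intro m h; simp⟩
    set y : ℕ → Bool := fun k => x (k + n) with hy
    have hcat : cat s y = x := by
      funext m
      rcases lt_or_ge m n with hm | hm
      · have hm' : m < s.length := by omega
        simpa [cat, dif_pos hm'] using hsget m hm'
      · have hm' : s.length ≤ m := by omega
        rw [cat_apply_ge s y hm', hslen, hy]
        simp only []
        congr 1
        omega
    have hyX : y ∈ X := (hX s y).mp (hcat ▸ hx)
    obtain ⟨_, ⟨k, rfl⟩, hk⟩ := hcov hyX
    refine mem_iUnion.mpr ⟨Encodable.encode (s, k), ?_⟩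
    simp only [he, hslen, if_pos rfl]
    exact ⟨y, hk, hcat⟩
  · intro u hu
    obtain ⟨_, ⟨m, rfl⟩, hm⟩ := hu
    by_cases hlen : (e m).1.length = n
    · have hm2 : u ∈ splitPts (cat (e m).1 '' Y (e m).2) := by simpa [hlen] using hm
      obtain ⟨x, ⟨y, hy, rfl⟩, x', ⟨y', hy', rfl⟩, hne, hsplit⟩ := hm2
      have hyne : y ≠ y' := fun h => hne (h ▸ rfl)
      have : splitPt y y' ∈ b := hsp (mem_iUnion.mpr ⟨(e m).2, y, hy, y', hy', hyne, rfl⟩)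
      exact ⟨splitPt y y', this, by rw [← hsplit, splitPt_cat _ hyne, hlen]⟩
    · have hm2 : u ∈ splitPts (∅ : Set (ℕ → Bool)) := by simpa [hlen] using hm
      obtain ⟨x, hx, -⟩ := hm2
      exact absurd hx (notMem_empty x)
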